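/- Let $C_1,\dots,C_{14}$ be the 14 basis elements of $\mathfrak{g}_2$ in its 7-dimensional fundamental representation as given in the paper (e.g., $C_1 = \frac{1}{\sqrt 2}(-e_{47}-e_{56}+e_{65}+e_{74})$, ..., $C_{14} = \frac{1}{\sqrt 6}(-2e_{17}+e_{24}-e_{35}-e_{42}+e_{53}+2e_{71})$). Then the Casimir tensor satisfies $-\sum_{a=1}^{14} C_a \otimes C_a = \sum_{i,j=1}^7 e_{ij}\otimes e_{ji} - \sum_{i,j=1}^7 e_{ij}\otimes e_{ij} + \frac{1}{3}\sum_{i=1}^7 \mathbb{O}_i \otimes \mathbb{O}_i$, where $\mathbb{O}_1,\dots,\mathbb{O}_7$ are the right octonion multiplication matrices. -/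

import Mathlib

open Matrix Kronecker

/-- `7 × 7` real matrix unit. -/
def E7 (i j : Fin 7) : Matrix (Fin 7) (Fin 7) ℝ := Matrix.single i j 1

/-- The 14 basis elements `C₁,…,C₁₄` of `𝔤₂` in the 7-dimensional fundamental
representation (0-based index: `g2C ⟨a-1,_⟩ = Cₐ`). -/
noncomputable def g2C (a : Fin 14) : Matrix (Fin 7) (Fin 7) ℝ :=
  match a.val with
  | 0 => (Real.sqrt 2)⁻¹ • (-E7 3 6 - E7 4 5 + E7 5 4 + E7 6 3)
  | 1 => (Real.sqrt 2)⁻¹ • (E7 3 5 - E7 4 6 - E7 5 3 + E7 6 4)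
  | 2 => (Real.sqrt 2)⁻¹ • (-E7 3 4 + E7 4 3 - E7 5 6 + E7 6 5)
  | 3 => (Real.sqrt 2)⁻¹ • (E7 1 6 + E7 2 5 - E7 5 2 - E7 6 1)
  | 4 => (Real.sqrt 2)⁻¹ • (-E7 1 5 + E7 2 6 + E7 5 1 - E7 6 2)
  | 5 => (Real.sqrt 2)⁻¹ • (E7 1 4 - E7 2 3 + E7 3 2 - E7 4 1)
  | 6 => (Real.sqrt 2)⁻¹ • (-E7 1 3 - E7 2 4 + E7 3 1 + E7 4 2)
  | 7 => (Real.sqrt 6)⁻¹ •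
      (-(2 : ℝ) • E7 1 2 + (2 : ℝ) • E7 2 1 + E7 3 4 - E7 4 3 - E7 5 6 + E7 6 5)
  | 8 => (Real.sqrt 6)⁻¹ •
      (-(2 : ℝ) • E7 0 1 + (2 : ℝ) • E7 1 0 + E7 3 6 - E7 4 5 + E7 5 4 - E7 6 3)
  | 9 => (Real.sqrt 6)⁻¹ •
      (-(2 : ℝ) • E7 0 2 + (2 : ℝ) • E7 2 0 - E7 3 5 - E7 4 6 + E7 5 3 + E7 6 4)
  | 10 => (Real.sqrt 6)⁻¹ •
      (-(2 : ℝ) • E7 0 3 - E7 1 6 + E7 2 5 + (2 : ℝ) • E7 3 0 - E7 5 2 + E7 6 1)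
  | 11 => (Real.sqrt 6)⁻¹ •
      (-(2 : ℝ) • E7 0 4 + E7 1 5 + E7 2 6 + (2 : ℝ) • E7 4 0 - E7 5 1 - E7 6 2)
  | 12 => (Real.sqrt 6)⁻¹ •
      (-(2 : ℝ) • E7 0 5 - E7 1 4 - E7 2 3 + E7 3 2 + E7 4 1 + (2 : ℝ) • E7 5 0)
  | _ => (Real.sqrt 6)⁻¹ •
      (-(2 : ℝ) • E7 0 6 + E7 1 3 - E7 2 4 - E7 3 1 + E7 4 2 + (2 : ℝ) • E7 6 0)


/-- The right octonion multiplication matrices `𝕆₁,…,𝕆₇` (0-based index). -/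
def octO (i : Fin 7) : Matrix (Fin 7) (Fin 7) ℝ :=
  match i.val with
  | 0 => E7 2 1 - E7 1 2 + E7 4 3 - E7 3 4 - E7 6 5 + E7 5 6
  | 1 => E7 0 2 - E7 2 0 + E7 5 3 - E7 3 5 + E7 6 4 - E7 4 6
  | 2 => E7 1 0 - E7 0 1 + E7 6 3 - E7 3 6 - E7 5 4 + E7 4 5
  | 3 => E7 0 4 + E7 1 5 + E7 2 6 - E7 4 0 - E7 5 1 - E7 6 2
  | 4 => E7 3 0 - E7 6 1 + E7 5 2 - E7 0 3 - E7 2 5 + E7 1 6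
  | 5 => E7 6 0 + E7 3 1 - E7 4 2 - E7 1 3 + E7 2 4 - E7 0 6
  | _ => E7 4 1 - E7 5 0 + E7 3 2 - E7 2 3 - E7 1 4 + E7 0 5

/-!
The skew-symmetric matrices `E7 i j - E7 j i` span `𝔰𝔬(7)`, and the 21 pairs `{i, j}` split
into seven triples, each a perfect matching of the six points other than one. Each such
three-dimensional block `⟨X, Y, Z⟩` contains one generator `(Y - Z)/√2` of `𝔤₂`, one generator
`(-2X + Y + Z)/√6` of `𝔤₂` and one octonion matrix `±(X + Y + Z)`. Up to the factor `1/√3` on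
the octonion matrix these are the rows of a Helmert matrix applied to `(X, Y, Z)`, so the
Casimir tensor `X ⊗ X + Y ⊗ Y + Z ⊗ Z` of the block is the sum of the corresponding three tensor
squares. Summing over the blocks, `Σ Cₐ ⊗ Cₐ + ⅓ Σ 𝕆ᵢ ⊗ 𝕆ᵢ` is the Casimir tensor
`Σ_{i<j} (eᵢⱼ - eⱼᵢ) ⊗ (eᵢⱼ - eⱼᵢ) = Σ eᵢⱼ ⊗ eᵢⱼ - Σ eᵢⱼ ⊗ eⱼᵢ` of `𝔰𝔬(7)`.
-/

theorem LinearMap.helmert_apply_self_sum {R M N : Type*} [Field R] [CharZero R]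
    [AddCommGroup M] [Module R M] [AddCommGroup N] [Module R N]
    (B : M →ₗ[R] M →ₗ[R] N) (x y z : M) :
    (2⁻¹ : R) • B (y - z) (y - z) + (6⁻¹ : R) • B (-2 • x + y + z) (-2 • x + y + z)
      + (3⁻¹ : R) • B (x + y + z) (x + y + z) = B x x + B y y + B z z := by
  simp only [map_add, map_sub, map_zsmul, LinearMap.add_apply, LinearMap.sub_apply,
    LinearMap.smul_apply]
  module

namespace Matrix

variable {l m n p α : Type*}

theorem kroneckerBilinear_apply_apply {R : Type*} [CommSemiring R] [Semiring α] [Algebra R α]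
    (A : Matrix l m α) (B : Matrix n p α) : kroneckerBilinear (R := R) A B = A ⊗ₖ B :=
  rfl

theorem sub_kronecker_sub_self [CommRing α] (A B : Matrix l m α) :
    (A - B) ⊗ₖ (A - B) = A ⊗ₖ A + B ⊗ₖ B - A ⊗ₖ B - B ⊗ₖ A := by
  simp only [← kroneckerBilinear_apply_apply (R := α), map_sub, LinearMap.sub_apply]
  abel

theorem neg_kronecker_neg [CommRing α] (A : Matrix l m α) (B : Matrix n p α) :
    (-A) ⊗ₖ (-B) = A ⊗ₖ B := by
  simp only [← kroneckerBilinear_apply_apply (R := α), map_neg, LinearMap.neg_apply, neg_neg]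

theorem inv_sqrt_smul_kronecker_self {c : ℝ} (hc : 0 ≤ c) (A : Matrix l m ℝ) :
    ((√c)⁻¹ • A) ⊗ₖ ((√c)⁻¹ • A) = c⁻¹ • A ⊗ₖ A := by
  rw [smul_kronecker, kronecker_smul, smul_smul, ← mul_inv, Real.mul_self_sqrt hc]

end Matrix

def skewE7 (i j : Fin 7) : Matrix (Fin 7) (Fin 7) ℝ := E7 i j - E7 j i

def so7BlockX : Fin 7 → Matrix (Fin 7) (Fin 7) ℝ :=
  ![skewE7 0 1, skewE7 0 2, skewE7 1 2, skewE7 0 3, skewE7 0 4, skewE7 0 5, skewE7 0 6]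

def so7BlockY : Fin 7 → Matrix (Fin 7) (Fin 7) ℝ :=
  ![skewE7 5 4, skewE7 6 4, skewE7 6 5, skewE7 2 5, skewE7 2 6, skewE7 3 2, skewE7 4 2]

def so7BlockZ : Fin 7 → Matrix (Fin 7) (Fin 7) ℝ :=
  ![skewE7 3 6, skewE7 5 3, skewE7 3 4, skewE7 6 1, skewE7 1 5, skewE7 4 1, skewE7 1 3]

/- In the paper's labels, the block spanned by `so7BlockX k`, `so7BlockY k`, `so7BlockZ k`
contains `C_{k+1}`, `C_{8 + blockLongIndex k}` and `±𝕆_{1 + blockOctIndex k}`. -/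
def blockLongIndex : Equiv.Perm (Fin 7) := Equiv.swap 0 1 * Equiv.swap 1 2

def blockOctIndex : Equiv.Perm (Fin 7) := Equiv.swap 0 2 * Equiv.swap 3 4 * Equiv.swap 5 6

theorem sum_so7Block_kronecker_self :
    ∑ k, (so7BlockX k ⊗ₖ so7BlockX k + so7BlockY k ⊗ₖ so7BlockY k + so7BlockZ k ⊗ₖ so7BlockZ k)
      = (∑ i : Fin 7, ∑ j : Fin 7, E7 i j ⊗ₖ E7 i j)
        - ∑ i : Fin 7, ∑ j : Fin 7, E7 i j ⊗ₖ E7 j i := by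
  simp only [Fin.sum_univ_seven, so7BlockX, so7BlockY, so7BlockZ, skewE7, sub_kronecker_sub_self,
    cons_val]
  abel

theorem g2C_castAdd (k : Fin 7) :
    g2C (Fin.castAdd 7 k) = (√2)⁻¹ • (so7BlockY k - so7BlockZ k) := by
  fin_cases k <;>
    simp only [g2C, so7BlockY, so7BlockZ, skewE7, Fin.isValue, Fin.zero_eta, Fin.mk_one,
      Fin.reduceFinMk, Fin.reduceCastAdd, Fin.coe_ofNat_eq_mod, Nat.reduceMod, Nat.zero_mod,
      Nat.one_mod, cons_val_zero, cons_val_one, cons_val] <;>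
    module

theorem g2C_natAdd_blockLongIndex (k : Fin 7) :
    g2C (Fin.natAdd 7 (blockLongIndex k))
      = (√6)⁻¹ • (-2 • so7BlockX k + so7BlockY k + so7BlockZ k) := by
  fin_cases k <;>
    simp only [g2C, blockLongIndex, so7BlockX, so7BlockY, so7BlockZ, skewE7, Fin.isValue,
      Fin.zero_eta, Fin.mk_one, Fin.reduceFinMk, Equiv.Perm.coe_mul, Function.comp_apply,
      Equiv.swap_apply_def, Fin.reduceEq, ↓reduceIte, Fin.natAdd_eq_addNat, Fin.reduceAddNat,
      Fin.coe_ofNat_eq_mod, Nat.reduceMod, Nat.mod_succ, cons_val_zero, cons_val_one, cons_val] <;>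
    module

theorem octO_blockOctIndex (k : Fin 7) :
    octO (blockOctIndex k) = so7BlockX k + so7BlockY k + so7BlockZ k ∨
      octO (blockOctIndex k) = -(so7BlockX k + so7BlockY k + so7BlockZ k) := by
  fin_cases k <;>
    simp only [octO, blockOctIndex, so7BlockX, so7BlockY, so7BlockZ, skewE7, Fin.isValue,
      Fin.zero_eta, Fin.mk_one, Fin.reduceFinMk, Equiv.Perm.coe_mul, Function.comp_apply,
      Equiv.swap_apply_def, Fin.reduceEq, ↓reduceIte, Fin.coe_ofNat_eq_mod, Nat.reduceMod,
      Nat.mod_succ, cons_val_zero, cons_val_one, cons_val] <;>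
    first | (left; module) | (right; module)

theorem octO_kronecker_self_blockOctIndex (k : Fin 7) :
    octO (blockOctIndex k) ⊗ₖ octO (blockOctIndex k)
      = (so7BlockX k + so7BlockY k + so7BlockZ k) ⊗ₖ (so7BlockX k + so7BlockY k + so7BlockZ k) := by
  obtain h | h := octO_blockOctIndex k <;> rw [h]
  exact neg_kronecker_neg _ _

theorem sum_g2C_kronecker_self_add_octO :
    ∑ a, g2C a ⊗ₖ g2C a + (3⁻¹ : ℝ) • ∑ m, octO m ⊗ₖ octO m
      = ∑ k, (so7BlockX k ⊗ₖ so7BlockX k + so7BlockY k ⊗ₖ so7BlockY k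
        + so7BlockZ k ⊗ₖ so7BlockZ k) := by
  rw [Fin.sum_univ_add (a := 7) (b := 7),
    ← Equiv.sum_comp blockLongIndex fun k ↦ g2C (Fin.natAdd 7 k) ⊗ₖ g2C (Fin.natAdd 7 k),
    ← Equiv.sum_comp blockOctIndex fun m ↦ octO m ⊗ₖ octO m, Finset.smul_sum,
    ← Finset.sum_add_distrib, ← Finset.sum_add_distrib]
  refine Finset.sum_congr rfl fun k _ ↦ ?_
  rw [g2C_castAdd, g2C_natAdd_blockLongIndex, octO_kronecker_self_blockOctIndex,
    inv_sqrt_smul_kronecker_self zero_le_two, inv_sqrt_smul_kronecker_self (by norm_num)]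
  exact LinearMap.helmert_apply_self_sum (M := Matrix (Fin 7) (Fin 7) ℝ)
    (N := Matrix (Fin 7 × Fin 7) (Fin 7 × Fin 7) ℝ) (kroneckerBilinear (R := ℝ)) _ _ _

/-- The Casimir tensor of `𝔤₂`:
`-Σₐ Cₐ ⊗ Cₐ = Σᵢⱼ eᵢⱼ⊗eⱼᵢ - Σᵢⱼ eᵢⱼ⊗eᵢⱼ + (1/3) Σᵢ 𝕆ᵢ⊗𝕆ᵢ`. -/
theorem stmt17 :
    -∑ a : Fin 14, g2C a ⊗ₖ g2C a
      = (∑ i : Fin 7, ∑ j : Fin 7, E7 i j ⊗ₖ E7 j i)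
        - (∑ i : Fin 7, ∑ j : Fin 7, E7 i j ⊗ₖ E7 i j)
        + (1 / 3 : ℝ) • ∑ i : Fin 7, octO i ⊗ₖ octO i := by
  have h := sum_g2C_kronecker_self_add_octO.trans sum_so7Block_kronecker_self
  rw [← eq_sub_iff_add_eq] at h
  rw [h, one_div]
  abel
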